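/- Let n be a positive integer, σ > 0, X = {x ∈ ℝⁿ : Σᵢ|xᵢ| ≤ 1} the unit ℓ₁ ball, and let ξ ∼ N(0, σ²I_n) be a standard Gaussian vector scaled by σ. Let x̂ : ℝⁿ → X be any measurable map satisfying ‖x̂(ω) − ω‖_∞ = min_{y∈X} ‖y − ω‖_∞ for every ω ∈ ℝⁿ. Then for every x ∈ X and every ρ > 0: E[ ‖x̂(x + ξ) − x‖₂² ] ≤ 4ρσ + 8n·exp(−ρ²/2). -/

import Mathlib

open MeasureTheory ProbabilityTheory
open scoped NNReal

/-!
If `‖ξ‖_∞ < ρσ`, the minimizing property of `x̂` at `ω = x + ξ`, tested against `x ∈ X`, and the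
triangle inequality give `‖x̂(ω) − x‖_∞ ≤ 2‖ξ‖_∞ < 2ρσ`; in any case `‖x̂(ω) − x‖₁ ≤ 2`. Since
`‖u‖₂² ≤ ‖u‖_∞ ‖u‖₁`, the squared error is below `4ρσ` on that event and below `4` always. The
complementary event has probability at most `2n·exp(−ρ²/2)`, by the Gaussian Chernoff bound on
each coordinate and a union bound.
-/

lemma hasSubgaussianMGF_id_gaussianReal (v : ℝ≥0) :
    HasSubgaussianMGF id v (gaussianReal 0 v) where
  integrable_exp_mul := integrable_exp_mul_gaussianReal
  mgf_le t := by simp [mgf_id_gaussianReal, mul_comm]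

lemma gaussianReal_real_norm_ge_le (v : ℝ≥0) {ε : ℝ} (hε : 0 ≤ ε) :
    (gaussianReal 0 v).real {x | ε ≤ ‖x‖} ≤ 2 * Real.exp (-ε ^ 2 / (2 * v)) := by
  have h := hasSubgaussianMGF_id_gaussianReal v
  have hsplit : {x : ℝ | ε ≤ ‖x‖} ⊆ {x | ε ≤ id x} ∪ {x | ε ≤ (-id) x} := by
    intro x hx
    simp only [Set.mem_ofPred_eq, Real.norm_eq_abs] at hx
    rcases le_abs'.1 hx with hneg | hpos
    · exact Or.inr (show ε ≤ -x by linarith)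
    · exact Or.inl hpos
  calc (gaussianReal 0 v).real {x | ε ≤ ‖x‖}
      ≤ (gaussianReal 0 v).real {x | ε ≤ id x} + (gaussianReal 0 v).real {x | ε ≤ (-id) x} :=
        (measureReal_mono hsplit).trans (measureReal_union_le _ _)
    _ ≤ Real.exp (-ε ^ 2 / (2 * v)) + Real.exp (-ε ^ 2 / (2 * v)) :=
        add_le_add (h.measure_ge_le hε) (h.neg.measure_ge_le hε)
    _ = 2 * Real.exp (-ε ^ 2 / (2 * v)) := by ring

lemma measureReal_pi_norm_ge_le_sum {ι E : Type*} [Fintype ι] [NormedAddCommGroup E]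
    [MeasurableSpace E] {μ : ι → Measure E} [∀ i, IsProbabilityMeasure (μ i)]
    [OpensMeasurableSpace E] {r : ℝ} (hr : 0 < r) :
    (Measure.pi μ).real {ξ | r ≤ ‖ξ‖} ≤ ∑ i, (μ i).real {y | r ≤ ‖y‖} := by
  have hcover : {ξ : ι → E | r ≤ ‖ξ‖} ⊆ ⋃ i, Function.eval i ⁻¹' {y | r ≤ ‖y‖} := by
    intro ξ hξ
    by_contra hc
    simp only [Set.mem_iUnion, Set.mem_preimage, Set.mem_ofPred_eq, not_exists, not_le] at hc
    exact (not_lt.2 hξ) ((pi_norm_lt_iff hr).2 hc)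
  calc (Measure.pi μ).real {ξ | r ≤ ‖ξ‖}
      ≤ ∑ i, (Measure.pi μ).real (Function.eval i ⁻¹' {y | r ≤ ‖y‖}) :=
        (measureReal_mono hcover).trans (measureReal_iUnion_fintype_le _)
    _ = ∑ i, (μ i).real {y | r ≤ ‖y‖} := by
        refine Finset.sum_congr rfl fun i _ => ?_
        exact (measurePreserving_eval μ i).measureReal_preimage
          (measurableSet_le measurable_const measurable_norm).nullMeasurableSet

lemma integral_le_add_mul_measureReal {Ω : Type*} [MeasurableSpace Ω] {μ : Measure Ω}
    [IsProbabilityMeasure μ] {f : Ω → ℝ} {A : Set Ω} (hA : MeasurableSet A) {c d : ℝ}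
    (hf₀ : 0 ≤ f) (hf : ∀ ω, f ω ≤ c + A.indicator (fun _ => d) ω) :
    ∫ ω, f ω ∂μ ≤ c + d * μ.real A := by
  have hg : Integrable (fun ω => c + A.indicator (fun _ => d) ω) μ :=
    (integrable_const c).add ((integrable_const d).indicator hA)
  calc ∫ ω, f ω ∂μ ≤ ∫ ω, c + A.indicator (fun _ => d) ω ∂μ :=
        integral_mono_of_nonneg (ae_of_all _ hf₀) hg (ae_of_all _ hf)
    _ = c + d * μ.real A := by
        rw [integral_add (integrable_const c) ((integrable_const d).indicator hA),
          integral_const, integral_indicator_const _ hA]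
        simp [mul_comm]

lemma norm_sub_le_two_mul_of_norm_sub_le {E : Type*} [SeminormedAddCommGroup E] {x y ω : E}
    (h : ‖y - ω‖ ≤ ‖x - ω‖) : ‖y - x‖ ≤ 2 * ‖ω - x‖ :=
  calc ‖y - x‖ ≤ ‖y - ω‖ + ‖ω - x‖ := norm_sub_le_norm_sub_add_norm_sub y ω x
    _ ≤ 2 * ‖ω - x‖ := by rw [norm_sub_rev x ω] at h; linarith

section LOneBall

variable {ι : Type*} [Fintype ι]

lemma sum_sq_le_norm_mul_sum_abs (u : ι → ℝ) : ∑ i, u i ^ 2 ≤ ‖u‖ * ∑ i, |u i| := by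
  rw [Finset.mul_sum]
  refine Finset.sum_le_sum fun i _ => ?_
  rw [← sq_abs, sq]
  exact mul_le_mul_of_nonneg_right (norm_le_pi_norm u i) (abs_nonneg _)

lemma norm_le_sum_abs (u : ι → ℝ) : ‖u‖ ≤ ∑ i, |u i| :=
  (pi_norm_le_iff_of_nonneg (Finset.sum_nonneg fun i _ => abs_nonneg (u i))).2 fun i =>
    Finset.single_le_sum (f := fun j => |u j|) (fun _ _ => abs_nonneg _) (Finset.mem_univ i)

lemma sum_abs_sub_le_two {x y : ι → ℝ} (hx : ∑ i, |x i| ≤ 1) (hy : ∑ i, |y i| ≤ 1) :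
    ∑ i, |y i - x i| ≤ 2 :=
  calc ∑ i, |y i - x i| ≤ ∑ i, (|y i| + |x i|) := Finset.sum_le_sum fun i _ => abs_sub _ _
    _ ≤ 2 := by rw [Finset.sum_add_distrib]; linarith

lemma sum_sq_sub_le_of_norm_sub_le {x y ξ : ι → ℝ}
    (hx : ∑ i, |x i| ≤ 1) (hy : ∑ i, |y i| ≤ 1) (hmin : ‖y - (x + ξ)‖ ≤ ‖x - (x + ξ)‖)
    {r : ℝ} (hr : 0 ≤ r) :
    ∑ i, (y i - x i) ^ 2 ≤ 4 * r + {ξ | r ≤ ‖ξ‖}.indicator (fun _ => 4) ξ := by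
  have hl1 : ∑ i, |(y - x) i| ≤ 2 := sum_abs_sub_le_two hx hy
  have hsq : ∑ i, (y i - x i) ^ 2 ≤ 2 * ‖y - x‖ :=
    (sum_sq_le_norm_mul_sum_abs (y - x)).trans (by nlinarith [norm_nonneg (y - x)])
  rw [Set.indicator_apply]
  split_ifs with hξ
  · linarith [(norm_le_sum_abs (y - x)).trans hl1]
  · have hξ : ‖ξ‖ < r := not_le.1 hξ
    have hclose : ‖y - x‖ ≤ 2 * ‖ξ‖ := by
      simpa using norm_sub_le_two_mul_of_norm_sub_le hmin
    linarith

end LOneBall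

theorem stmt19_general
    {n : ℕ} (σ : ℝ) (hσ : 0 < σ)
    (X : Set (Fin n → ℝ)) (hX : X = {x | ∑ i, |x i| ≤ 1})
    (P : Measure (Fin n → ℝ))
    (hP : P = Measure.pi fun _ => gaussianReal 0 (σ ^ 2).toNNReal)
    (xhat : (Fin n → ℝ) → (Fin n → ℝ))
    (hmem : ∀ ω, xhat ω ∈ X)
    (hmin : ∀ ω, ∀ y ∈ X, ‖xhat ω - ω‖ ≤ ‖y - ω‖) :
    ∀ x ∈ X, ∀ ρ : ℝ, 0 < ρ →
      ∫ ξ, (∑ i, (xhat (x + ξ) i - x i) ^ 2) ∂P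
        ≤ 4 * ρ * σ + 8 * n * Real.exp (-ρ ^ 2 / 2) := by
  subst hX
  intro x hx ρ hρ
  have : IsProbabilityMeasure P := hP ▸ inferInstance
  have hr : 0 < ρ * σ := mul_pos hρ hσ
  have hcoord : (gaussianReal 0 (σ ^ 2).toNNReal).real {y | ρ * σ ≤ ‖y‖}
      ≤ 2 * Real.exp (-ρ ^ 2 / 2) := by
    have h := gaussianReal_real_norm_ge_le (σ ^ 2).toNNReal hr.le
    rwa [Real.coe_toNNReal _ (sq_nonneg σ),
      show -(ρ * σ) ^ 2 / (2 * σ ^ 2) = -ρ ^ 2 / 2 by field_simp] at h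
  have htail : P.real {ξ | ρ * σ ≤ ‖ξ‖} ≤ n * (2 * Real.exp (-ρ ^ 2 / 2)) :=
    calc P.real {ξ | ρ * σ ≤ ‖ξ‖}
        ≤ ∑ _i : Fin n, (gaussianReal 0 (σ ^ 2).toNNReal).real {y | ρ * σ ≤ ‖y‖} :=
          hP ▸ measureReal_pi_norm_ge_le_sum hr
      _ ≤ ∑ _i : Fin n, 2 * Real.exp (-ρ ^ 2 / 2) := Finset.sum_le_sum fun _ _ => hcoord
      _ = n * (2 * Real.exp (-ρ ^ 2 / 2)) := by simp
  calc _ ≤ 4 * (ρ * σ) + 4 * P.real {ξ | ρ * σ ≤ ‖ξ‖} :=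
        integral_le_add_mul_measureReal (measurableSet_le measurable_const measurable_norm)
          (fun ξ => Finset.sum_nonneg fun _ _ => sq_nonneg _)
          (fun ξ => sum_sq_sub_le_of_norm_sub_le hx (hmem (x + ξ)) (hmin (x + ξ) x hx) hr.le)
    _ ≤ 4 * ρ * σ + 8 * n * Real.exp (-ρ ^ 2 / 2) := by linarith

/-- motivating example: for the unit `ℓ₁` ball `X`, Gaussian
noise `ξ ∼ N(0, σ²I_n)` (modelled by a product of one-dimensional Gaussians),
and any measurable selection `x̂(ω)` of a minimizer of `y ↦ ‖y − ω‖_∞` over `X`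
(the Pi norm on `Fin n → ℝ` is the sup norm), one has, for every `x ∈ X` and
`ρ > 0`, `E[‖x̂(x+ξ) − x‖₂²] ≤ 4ρσ + 8n exp(−ρ²/2)`. -/
theorem stmt19
    {n : ℕ} (hn : 0 < n) (σ : ℝ) (hσ : 0 < σ)
    (X : Set (Fin n → ℝ)) (hX : X = {x | ∑ i, |x i| ≤ 1})
    (P : Measure (Fin n → ℝ))
    (hP : P = Measure.pi fun _ => gaussianReal 0 (σ ^ 2).toNNReal)
    (xhat : (Fin n → ℝ) → (Fin n → ℝ)) (hmeas : Measurable xhat)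
    (hmem : ∀ ω, xhat ω ∈ X)
    (hmin : ∀ ω, ∀ y ∈ X, ‖xhat ω - ω‖ ≤ ‖y - ω‖) :
    ∀ x ∈ X, ∀ ρ : ℝ, 0 < ρ →
      ∫ ξ, (∑ i, (xhat (x + ξ) i - x i) ^ 2) ∂P
        ≤ 4 * ρ * σ + 8 * n * Real.exp (-ρ ^ 2 / 2) :=
  stmt19_general σ hσ X hX P hP xhat hmem hmin
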